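/- Let φ = φ_1 ∘ φ_2 ∘ ⋯ ∘ φ_l be a composition where each φ_i is OR on N_i bits restricted to inputs of Hamming weight 0 or ≥ h_i, or AND on N_i bits restricted to inputs of Hamming weight N_i or ≤ N_i - h_i, and let D be the resulting domain of φ. Then, with unit edge weights, (max_{x∈D: φ(x)=1} R_{s,t}(G_φ(x))) · (max_{x∈D: φ(x)=0} R_{s',t'}(G'_φ(x))) = ∏_{i=1}^l N_i / ∏_{i=1}^l h_i. -/

import Mathlib

open scoped ENNReal

namespace STConn

variable {V E : Type*}

/-- `v` is an endpoint of edge `e`. -/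
def Touches (ends : E → V × V) (e : E) (v : V) : Prop :=
  (ends e).1 = v ∨ (ends e).2 = v

/-- Net flow out of vertex `v` for an edge-valued function `θ` (value along the
fixed orientation of each edge). -/
noncomputable def netflow [Fintype E] [DecidableEq V] (ends : E → V × V) (θ : E → ℝ) (v : V) : ℝ :=
  ∑ e, θ e * ((if (ends e).1 = v then (1:ℝ) else 0) - (if (ends e).2 = v then 1 else 0))

/-- `θ` is a unit `st`-flow: net flow `+1` at `s`, `-1` at `t`, `0` elsewhere. -/
def IsUnitFlow [Fintype E] [DecidableEq V] (ends : E → V × V) (s t : V) (θ : E → ℝ) : Prop :=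
  ∀ v, netflow ends θ v = (if v = s then (1:ℝ) else 0) - (if v = t then 1 else 0)

/-- Energy of a flow with respect to edge weights `c`. -/
noncomputable def energy [Fintype E] (c : E → ℝ) (θ : E → ℝ) : ℝ :=
  ∑ e, θ e ^ 2 / c e

/-- Effective resistance between `s` and `t`, restricted to flows supported on `S`
(taking value `∞` if no unit `st`-flow supported on `S` exists). -/
noncomputable def effResOn [Fintype E] [DecidableEq V] (ends : E → V × V) (c : E → ℝ)
    (S : Set E) (s t : V) : ℝ≥0∞ :=
  ⨅ θ : {θ : E → ℝ // IsUnitFlow ends s t θ ∧ ∀ e ∉ S, θ e = 0},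
    ENNReal.ofReal (energy c θ.1)

/-- Effective resistance between `s` and `t` in the network `(ends, c)`. -/
noncomputable def effRes [Fintype E] [DecidableEq V] (ends : E → V × V) (c : E → ℝ)
    (s t : V) : ℝ≥0∞ :=
  effResOn ends c Set.univ s t

end STConn

namespace STConn

/-- Read-once AND-OR formulas on `N` variables (gates have fan-in `k+1`). -/
inductive Formula (N : ℕ) : Type where
  | var : Fin N → Formula N
  | and : (k : ℕ) → (Fin (k + 1) → Formula N) → Formula N
  | or : (k : ℕ) → (Fin (k + 1) → Formula N) → Formula N

namespace Formula

variable {N : ℕ}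

/-- Evaluation of a formula on an input. -/
def eval : Formula N → (Fin N → Bool) → Bool
  | .var i, x => x i
  | .and _ fs, x => (List.finRange _).all fun i => (fs i).eval x
  | .or _ fs, x => (List.finRange _).any fun i => (fs i).eval x

/-- The leaves of a formula; these index the edges of the graph `G_φ`. -/
def Leaves : Formula N → Type
  | .var _ => Unit
  | .and k fs => Σ i : Fin (k + 1), (fs i).Leaves
  | .or k fs => Σ i : Fin (k + 1), (fs i).Leaves

/-- The variable labelling a leaf. -/
def label : (φ : Formula N) → φ.Leaves → Fin N
  | .var i, _ => i
  | .and _ fs, ⟨i, l⟩ => (fs i).label l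
  | .or _ fs, ⟨i, l⟩ => (fs i).label l

/-- The internal (non-terminal) vertices of the series-parallel graph `G_φ`:
series composition (for `∧`) introduces `k` junction vertices. -/
def Inner : Formula N → Type
  | .var _ => Empty
  | .and k fs => (Σ i : Fin (k + 1), (fs i).Inner) ⊕ Fin k
  | .or k fs => Σ i : Fin (k + 1), (fs i).Inner

/-- The vertex set of `G_φ`: internal vertices plus the two terminals
(`Sum.inr true = s`, `Sum.inr false = t`). -/
abbrev Vert (φ : Formula N) : Type := φ.Inner ⊕ Bool

/-- Embedding the vertices of the `i`-th subgraph into a series composition. -/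
def vmapAnd (k : ℕ) (fs : Fin (k + 1) → Formula N) (i : Fin (k + 1)) :
    (fs i).Vert → (Formula.and k fs).Vert
  | .inl w => .inl (.inl ⟨i, w⟩)
  | .inr true =>
      if h : i.val = 0 then .inr true
      else .inl (.inr ⟨i.val - 1, by have := i.isLt; omega⟩)
  | .inr false =>
      if h : i.val = k then .inr false
      else .inl (.inr ⟨i.val, by have := i.isLt; omega⟩)

/-- Embedding the vertices of the `i`-th subgraph into a parallel composition. -/
def vmapOr (k : ℕ) (fs : Fin (k + 1) → Formula N) (i : Fin (k + 1)) :
    (fs i).Vert → (Formula.or k fs).Vert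
  | .inl w => .inl ⟨i, w⟩
  | .inr b => .inr b

/-- The endpoints of each edge (= leaf) of the series-parallel graph `G_φ`:
a variable is a single `st`-edge, `∧` composes the subgraphs in series, and
`∨` composes them in parallel. -/
def ends : (φ : Formula N) → φ.Leaves → φ.Vert × φ.Vert
  | .var _, _ => (.inr true, .inr false)
  | .and k fs, ⟨i, l⟩ =>
      (vmapAnd k fs i ((fs i).ends l).1, vmapAnd k fs i ((fs i).ends l).2)
  | .or k fs, ⟨i, l⟩ =>
      (vmapOr k fs i ((fs i).ends l).1, vmapOr k fs i ((fs i).ends l).2)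

/-- The dual formula: swap every `∧` with `∨`. -/
def dualF : Formula N → Formula N
  | .var i => .var i
  | .and k fs => .or k fun i => dualF (fs i)
  | .or k fs => .and k fun i => dualF (fs i)

def leavesFintype : (φ : Formula N) → Fintype φ.Leaves
  | .var _ => inferInstanceAs (Fintype Unit)
  | .and k fs =>
      letI := fun i => leavesFintype (fs i)
      inferInstanceAs (Fintype (Σ i : Fin (k + 1), (fs i).Leaves))
  | .or k fs =>
      letI := fun i => leavesFintype (fs i)
      inferInstanceAs (Fintype (Σ i : Fin (k + 1), (fs i).Leaves))

instance (φ : Formula N) : Fintype φ.Leaves := leavesFintype φ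

def innerDecEq : (φ : Formula N) → DecidableEq φ.Inner
  | .var _ => fun a => a.elim
  | .and k fs =>
      letI := fun i => innerDecEq (fs i)
      inferInstanceAs (DecidableEq ((Σ i : Fin (k + 1), (fs i).Inner) ⊕ Fin k))
  | .or k fs =>
      letI := fun i => innerDecEq (fs i)
      inferInstanceAs (DecidableEq (Σ i : Fin (k + 1), (fs i).Inner))

instance (φ : Formula N) : DecidableEq φ.Inner := innerDecEq φ

instance (φ : Formula N) : DecidableEq φ.Vert :=
  inferInstanceAs (DecidableEq (φ.Inner ⊕ Bool))

/-- The source terminal `s` of `G_φ`. -/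
def src (φ : Formula N) : φ.Vert := .inr true

/-- The sink terminal `t` of `G_φ`. -/
def snk (φ : Formula N) : φ.Vert := .inr false

end Formula
end STConn
namespace STConn
namespace Formula

/-- Relabel the variables of a formula along `f`. -/
def relabel {N M : ℕ} (f : Fin N → Fin M) : Formula N → Formula M
  | .var i => .var (f i)
  | .and k fs => .and k fun i => (fs i).relabel f
  | .or k fs => .or k fun i => (fs i).relabel f

end Formula
end STConn
namespace STConn

open Formula

/-- Number of variables of the composition described by `L`: each layer
`(isOr, k, h)` is a gate of fan-in `k + 1` (an `OR` if `isOr`, else an `AND`)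
with promise parameter `h`. -/
def numVars : List (Bool × ℕ × ℕ) → ℕ
  | [] => 1
  | (_, k, _) :: rest => (k + 1) * numVars rest

/-- The variables of the `i`-th block of a fan-in-`(k+1)` composition. -/
def blockEmb (k M : ℕ) (i : Fin (k + 1)) : Fin M → Fin ((k + 1) * M) := fun m =>
  ⟨i.val * M + m.val, by
    have hm := m.isLt
    have hi : i.val * M ≤ k * M := Nat.mul_le_mul_right _ (Nat.lt_succ_iff.mp i.isLt)
    have h2 : (k + 1) * M = k * M + M := by ring
    omega⟩

/-- The composed formula `φ = φ₁ ∘ φ₂ ∘ ⋯ ∘ φ_l` described by the layer list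
`L`, where layer `(isOr, k, h)` is an `OR` (resp. `AND`) gate of fan-in
`k + 1`. -/
def compF : (L : List (Bool × ℕ × ℕ)) → Formula (numVars L)
  | [] => .var ⟨0, Nat.one_pos⟩
  | (isOr, k, _) :: rest =>
      if isOr then
        .or k fun i => (compF rest).relabel (blockEmb k (numVars rest) i)
      else
        .and k fun i => (compF rest).relabel (blockEmb k (numVars rest) i)

/-- The promise domain of the composition: every block input satisfies the
inner promise, and the tuple of inner output values satisfies the outer
promise — for an `OR` layer, all values `0` or at least `h` values `1`; for an
`AND` layer, all values `1` or at most `N - h` values `1`. -/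
def inDom : (L : List (Bool × ℕ × ℕ)) → (Fin (numVars L) → Bool) → Prop
  | [], _ => True
  | (isOr, k, h) :: rest, x =>
      (∀ i : Fin (k + 1),
        inDom rest fun m => x (blockEmb k (numVars rest) i m)) ∧
      (if isOr then
        (∀ i : Fin (k + 1),
          (compF rest).eval (fun m => x (blockEmb k (numVars rest) i m)) = false) ∨
        h ≤ (Finset.univ.filter fun i : Fin (k + 1) =>
          (compF rest).eval (fun m => x (blockEmb k (numVars rest) i m)) = true).card
      else
        (∀ i : Fin (k + 1),
          (compF rest).eval (fun m => x (blockEmb k (numVars rest) i m)) = true) ∨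
        (Finset.univ.filter fun i : Fin (k + 1) =>
          (compF rest).eval (fun m => x (blockEmb k (numVars rest) i m)) = true).card
            ≤ (k + 1) - h)

end STConn

/-!
Thomson's principle bounds an effective resistance from above by the energy of any unit
`st`-flow, and Dirichlet's principle bounds it from below by the inverse energy of any potential
dropping by `1` from `s` to `t`. In a series composition of `N` blocks flows concatenate and
potentials are stacked, multiplying both bounds by `N`; in a parallel composition in which at
least `h` children are connected the flow is split evenly and the potential is shared, dividing
both bounds by `h`. The dual graph is the graph of the De Morgan dual formula with the edges
where `x = 0`, so it obeys the same recursion with `∧` and `∨` swapped, and both graphs are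
treated at once through a polarity `b`. By induction on the layers, every `x` in the domain has
resistance at most `∏ᵢ (Nᵢ or 1/hᵢ)`, with equality for the input whose `hᵢ` connected children
copy the extremal input of the next layer while the others are constant. The product of the
primal and the dual bound is `∏ᵢ Nᵢ / ∏ᵢ hᵢ`.
-/

namespace STConn

open Finset

section Network

variable {V E : Type*} [Fintype E] [DecidableEq V] {ends : E → V × V} {s t : V}

theorem isUnitFlow_iff [Fintype V] {θ : E → ℝ} :
    IsUnitFlow ends s t θ ↔
      ∀ g : V → ℝ, ∑ e, θ e * (g (ends e).1 - g (ends e).2) = g s - g t := by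
  have pairing : ∀ g : V → ℝ,
      ∑ v, g v * netflow ends θ v = ∑ e, θ e * (g (ends e).1 - g (ends e).2) := by
    intro g
    simp only [netflow, mul_sum]
    rw [sum_comm]
    refine sum_congr rfl fun e _ => ?_
    simp [mul_sub, sum_sub_distrib, mul_comm]
  constructor
  · intro hθ g
    rw [← pairing]
    simp [show ∀ v, _ = _ from hθ, mul_sub, sum_sub_distrib]
  · intro h v
    simpa [netflow, eq_comm] using h fun u => if u = v then 1 else 0

theorem effResOn_le_of_isUnitFlow {S : Set E} {θ : E → ℝ} (hθ : IsUnitFlow ends s t θ)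
    (hS : ∀ e ∉ S, θ e = 0) :
    effResOn ends (fun _ => 1) S s t ≤ ENNReal.ofReal (∑ e, θ e ^ 2) :=
  iInf_le_of_le ⟨θ, hθ, hS⟩ (by simp [energy])

/-- Dirichlet's principle, via Cauchy–Schwarz against any unit flow. -/
theorem ofReal_inv_le_effResOn [Fintype V] {P : E → Prop} [DecidablePred P] (ϕ : V → ℝ)
    (hϕ : ϕ s - ϕ t = 1) {q : ℝ} (hq : 0 < q)
    (henergy : ∑ e, (if P e then (ϕ (ends e).1 - ϕ (ends e).2) ^ 2 else 0) ≤ q) :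
    ENNReal.ofReal q⁻¹ ≤ effResOn ends (fun _ => 1) {e | P e} s t := by
  refine le_iInf fun ⟨θ, hθ, hS⟩ => ENNReal.ofReal_le_ofReal ?_
  set d : E → ℝ := fun e => if P e then ϕ (ends e).1 - ϕ (ends e).2 else 0
  have hpair : ∑ e, θ e * d e = 1 := by
    rw [← hϕ, ← isUnitFlow_iff.mp hθ ϕ]
    refine sum_congr rfl fun e _ => ?_
    by_cases he : P e
    · simp [d, he]
    · simp [d, he, hS e he]
  have hd : ∑ e, d e ^ 2 ≤ q := by
    refine le_of_eq_of_le (sum_congr rfl fun e _ => ?_) henergy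
    by_cases he : P e <;> simp [d, he]
  have cs := sum_mul_sq_le_sq_mul_sq univ θ d
  rw [hpair, one_pow] at cs
  simp only [energy, div_one]
  rw [inv_le_iff_one_le_mul₀ hq]
  nlinarith [sum_nonneg fun e (_ : e ∈ univ) => sq_nonneg (θ e)]

end Network

namespace Formula

variable {N M : ℕ}

instance instFintypeInner : (φ : Formula N) → Fintype φ.Inner
  | .var _ => inferInstanceAs (Fintype Empty)
  | .and k fs =>
      letI := fun i => instFintypeInner (fs i)
      inferInstanceAs (Fintype ((Σ i : Fin (k + 1), (fs i).Inner) ⊕ Fin k))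
  | .or k fs =>
      letI := fun i => instFintypeInner (fs i)
      inferInstanceAs (Fintype (Σ i : Fin (k + 1), (fs i).Inner))

theorem sum_leaves_or {k : ℕ} {fs : Fin (k + 1) → Formula N} (F : (Formula.or k fs).Leaves → ℝ) :
    ∑ l, F l = ∑ i, ∑ l : (fs i).Leaves, F ⟨i, l⟩ :=
  Fintype.sum_sigma F

theorem sum_leaves_and {k : ℕ} {fs : Fin (k + 1) → Formula N} (F : (Formula.and k fs).Leaves → ℝ) :
    ∑ l, F l = ∑ i, ∑ l : (fs i).Leaves, F ⟨i, l⟩ :=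
  Fintype.sum_sigma F

def relabelLeavesEquiv (f : Fin N → Fin M) : (φ : Formula N) → (φ.relabel f).Leaves ≃ φ.Leaves
  | .var _ => Equiv.refl Unit
  | .and _ fs => Equiv.sigmaCongrRight fun i => relabelLeavesEquiv f (fs i)
  | .or _ fs => Equiv.sigmaCongrRight fun i => relabelLeavesEquiv f (fs i)

def relabelInnerEquiv (f : Fin N → Fin M) : (φ : Formula N) → (φ.relabel f).Inner ≃ φ.Inner
  | .var _ => Equiv.refl Empty
  | .and k fs =>
      Equiv.sumCongr (Equiv.sigmaCongrRight fun i => relabelInnerEquiv f (fs i))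
        (Equiv.refl (Fin k))
  | .or _ fs => Equiv.sigmaCongrRight fun i => relabelInnerEquiv f (fs i)

def relabelVertEquiv (f : Fin N → Fin M) (φ : Formula N) : (φ.relabel f).Vert ≃ φ.Vert :=
  Equiv.sumCongr (relabelInnerEquiv f φ) (Equiv.refl Bool)

theorem label_relabel (f : Fin N → Fin M) :
    (φ : Formula N) → (l : (φ.relabel f).Leaves) →
      (φ.relabel f).label l = f (φ.label (relabelLeavesEquiv f φ l))
  | .var _, _ => rfl
  | .and _ fs, ⟨i, l⟩ => label_relabel f (fs i) l
  | .or _ fs, ⟨i, l⟩ => label_relabel f (fs i) l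

theorem relabelVertEquiv_vmapAnd (f : Fin N → Fin M) {k : ℕ} (fs : Fin (k + 1) → Formula N)
    (i : Fin (k + 1)) (u : ((fs i).relabel f).Vert) :
    relabelVertEquiv f (.and k fs) (vmapAnd k (fun j => (fs j).relabel f) i u) =
      vmapAnd k fs i (relabelVertEquiv f (fs i) u) := by
  rcases u with w | _ | _
  · rfl
  all_goals simp only [vmapAnd]; split_ifs <;> rfl

theorem relabelVertEquiv_vmapOr (f : Fin N → Fin M) {k : ℕ} (fs : Fin (k + 1) → Formula N)
    (i : Fin (k + 1)) (u : ((fs i).relabel f).Vert) :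
    relabelVertEquiv f (.or k fs) (vmapOr k (fun j => (fs j).relabel f) i u) =
      vmapOr k fs i (relabelVertEquiv f (fs i) u) := by
  rcases u with w | _ <;> rfl

theorem ends_relabel (f : Fin N → Fin M) :
    (φ : Formula N) → (l : (φ.relabel f).Leaves) →
      Prod.map (relabelVertEquiv f φ) (relabelVertEquiv f φ) ((φ.relabel f).ends l) =
        φ.ends (relabelLeavesEquiv f φ l)
  | .var _, _ => rfl
  | .and k fs, ⟨i, l⟩ => by
      have ih := ends_relabel f (fs i) l
      simp only [Prod.map, Prod.ext_iff] at ih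
      change (relabelVertEquiv f (.and k fs) (vmapAnd k _ i _),
        relabelVertEquiv f (.and k fs) (vmapAnd k _ i _)) = (vmapAnd k fs i _, vmapAnd k fs i _)
      rw [relabelVertEquiv_vmapAnd, relabelVertEquiv_vmapAnd, ih.1, ih.2]
  | .or k fs, ⟨i, l⟩ => by
      have ih := ends_relabel f (fs i) l
      simp only [Prod.map, Prod.ext_iff] at ih
      change (relabelVertEquiv f (.or k fs) (vmapOr k _ i _),
        relabelVertEquiv f (.or k fs) (vmapOr k _ i _)) = (vmapOr k fs i _, vmapOr k fs i _)
      rw [relabelVertEquiv_vmapOr, relabelVertEquiv_vmapOr, ih.1, ih.2]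

theorem ends_relabel_eq (f : Fin N → Fin M) (φ : Formula N) (l : (φ.relabel f).Leaves) :
    (φ.relabel f).ends l = Prod.map (relabelVertEquiv f φ).symm (relabelVertEquiv f φ).symm
      (φ.ends (relabelLeavesEquiv f φ l)) := by
  rw [← ends_relabel, Prod.map_map, Equiv.symm_comp_self, Prod.map_id, id]

theorem eval_relabel (f : Fin N → Fin M) (φ : Formula N) (x : Fin M → Bool) :
    (φ.relabel f).eval x = φ.eval (fun m => x (f m)) := by
  induction φ with
  | var => rfl
  | and k fs ih => simp only [relabel, eval, ih]
  | or k fs ih => simp only [relabel, eval, ih]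

theorem dualF_relabel (f : Fin N → Fin M) (φ : Formula N) :
    dualF (φ.relabel f) = (dualF φ).relabel f := by
  induction φ with
  | var => rfl
  | and k fs ih => simp only [relabel, dualF, ih]
  | or k fs ih => simp only [relabel, dualF, ih]

def HasFlowLE (φ : Formula N) (x : Fin N → Bool) (b : Bool) (r : ℝ) : Prop :=
  ∃ θ : φ.Leaves → ℝ,
    (∀ g : φ.Vert → ℝ, ∑ l, θ l * (g (φ.ends l).1 - g (φ.ends l).2) = g φ.src - g φ.snk) ∧
    (∀ l, x (φ.label l) ≠ b → θ l = 0) ∧ ∑ l, θ l ^ 2 ≤ r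

def HasPotentialLE (φ : Formula N) (x : Fin N → Bool) (b : Bool) (q : ℝ) : Prop :=
  ∃ ϕ : φ.Vert → ℝ, ϕ φ.src = 1 ∧ ϕ φ.snk = 0 ∧
    ∑ l, (if x (φ.label l) = b then (ϕ (φ.ends l).1 - ϕ (φ.ends l).2) ^ 2 else 0) ≤ q

section Bounds

variable {x : Fin N → Bool} {b : Bool}

theorem HasFlowLE.effResOn_le {φ : Formula N} {r : ℝ} (h : HasFlowLE φ x b r) :
    effResOn φ.ends (fun _ => 1) {l | x (φ.label l) = b} φ.src φ.snk ≤ ENNReal.ofReal r := by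
  obtain ⟨θ, hflow, hsupp, henergy⟩ := h
  exact (effResOn_le_of_isUnitFlow (isUnitFlow_iff.mpr hflow) hsupp).trans
    (ENNReal.ofReal_le_ofReal henergy)

theorem HasPotentialLE.ofReal_inv_le_effResOn {φ : Formula N} {q : ℝ}
    (h : HasPotentialLE φ x b q) (hq : 0 < q) :
    ENNReal.ofReal q⁻¹ ≤ effResOn φ.ends (fun _ => 1) {l | x (φ.label l) = b} φ.src φ.snk := by
  obtain ⟨ϕ, hsrc, hsnk, henergy⟩ := h
  exact STConn.ofReal_inv_le_effResOn ϕ (by rw [hsrc, hsnk, sub_zero]) hq henergy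

theorem HasFlowLE.mono {φ : Formula N} {r r' : ℝ} (h : HasFlowLE φ x b r) (hr : r ≤ r') :
    HasFlowLE φ x b r' := by
  obtain ⟨θ, hflow, hsupp, henergy⟩ := h
  exact ⟨θ, hflow, hsupp, henergy.trans hr⟩

theorem hasFlowLE_var {v : Fin N} (hv : x v = b) : HasFlowLE (.var v) x b 1 :=
  ⟨fun _ => 1, fun g => by simp [show (Formula.var v).Leaves = Unit from rfl, ends, src, snk],
    fun _ h => absurd hv h, by simp [show (Formula.var v).Leaves = Unit from rfl]⟩

theorem hasPotentialLE_var (v : Fin N) : HasPotentialLE (.var v) x b 1 := by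
  refine ⟨fun u => if u = .inr true then 1 else 0, rfl, rfl, ?_⟩
  change ∑ _l : Unit, (if x v = b then ((1 : ℝ) - 0) ^ 2 else 0) ≤ 1
  split_ifs <;> simp

theorem hasPotentialLE_zero {φ : Formula N} (hdead : ∀ l, x (φ.label l) ≠ b) :
    HasPotentialLE φ x b 0 :=
  ⟨fun u => if u = φ.src then 1 else 0, by simp, by simp [src, snk], by simp [hdead]⟩

theorem HasFlowLE.relabel {φ : Formula N} {f : Fin N → Fin M} {x : Fin M → Bool} {r : ℝ}
    (h : HasFlowLE φ (fun m => x (f m)) b r) : HasFlowLE (φ.relabel f) x b r := by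
  obtain ⟨θ, hflow, hsupp, henergy⟩ := h
  set eL := relabelLeavesEquiv f φ
  set eV := relabelVertEquiv f φ
  refine ⟨θ ∘ eL, fun g => ?_, fun l hl => hsupp _ ?_, ?_⟩
  · simp only [ends_relabel_eq, Prod.map, Function.comp_apply]
    rw [Equiv.sum_comp eL fun l' => θ l' * (g (eV.symm (φ.ends l').1) - g (eV.symm (φ.ends l').2))]
    exact hflow (g ∘ eV.symm)
  · rwa [label_relabel] at hl
  · simpa only [Function.comp_apply, Equiv.sum_comp eL fun l' => θ l' ^ 2] using henergy

theorem HasPotentialLE.relabel {φ : Formula N} {f : Fin N → Fin M} {x : Fin M → Bool} {q : ℝ}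
    (h : HasPotentialLE φ (fun m => x (f m)) b q) : HasPotentialLE (φ.relabel f) x b q := by
  obtain ⟨ϕ, hsrc, hsnk, henergy⟩ := h
  set eL := relabelLeavesEquiv f φ
  refine ⟨ϕ ∘ relabelVertEquiv f φ, hsrc, hsnk, ?_⟩
  simp only [ends_relabel_eq, Prod.map, Function.comp_apply, Equiv.apply_symm_apply, label_relabel]
  rwa [Equiv.sum_comp eL fun l' =>
    if x (f (φ.label l')) = b then (ϕ (φ.ends l').1 - ϕ (φ.ends l').2) ^ 2 else 0]

end Bounds

section Composition

variable {x : Fin N → Bool} {b : Bool} {k : ℕ} {fs : Fin (k + 1) → Formula N}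

theorem hasFlowLE_or {T : Finset (Fin (k + 1))} (hT : T.Nonempty) {r : ℝ}
    (h : ∀ i ∈ T, HasFlowLE (fs i) x b r) : HasFlowLE (.or k fs) x b (r / #T) := by
  choose θ hflow hsupp henergy using h
  have hT0 : (#T : ℝ) ≠ 0 := by exact_mod_cast hT.card_pos.ne'
  refine ⟨fun ⟨i, l⟩ => if hi : i ∈ T then θ i hi l / #T else 0, fun g => ?_, ?_, ?_⟩
  · have hchild : ∀ i, ∑ l : (fs i).Leaves, (if hi : i ∈ T then θ i hi l / #T else 0) *
        (g (vmapOr k fs i ((fs i).ends l).1) - g (vmapOr k fs i ((fs i).ends l).2)) =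
        if i ∈ T then (g (.inr true) - g (.inr false)) / #T else 0 := by
      intro i
      split_ifs with hi
      · simp only [div_mul_eq_mul_div, ← sum_div]
        exact congrArg (· / _) (hflow i hi (g ∘ vmapOr k fs i))
      · simp
    simp only [sum_leaves_or, ends, hchild, sum_ite_mem, univ_inter, sum_const, nsmul_eq_mul]
    field_simp
    rfl
  · rintro ⟨i, l⟩ hl
    dsimp only
    split_ifs with hi
    · rw [hsupp i hi l hl, zero_div]
    · rfl
  · have hchild : ∀ i, ∑ l : (fs i).Leaves, (if hi : i ∈ T then θ i hi l / #T else 0) ^ 2 ≤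
        if i ∈ T then r / #T ^ 2 else 0 := by
      intro i
      split_ifs with hi
      · simp only [div_pow, ← sum_div]
        gcongr
        exact henergy i hi
      · simp
    rw [sum_leaves_or]
    refine (sum_le_sum fun i _ => hchild i).trans_eq ?_
    simp only [sum_ite_mem, univ_inter, sum_const, nsmul_eq_mul]
    field_simp

theorem hasPotentialLE_or {q : Fin (k + 1) → ℝ} (h : ∀ i, HasPotentialLE (fs i) x b (q i)) :
    HasPotentialLE (.or k fs) x b (∑ i, q i) := by
  choose ϕ hsrc hsnk henergy using h
  let ψ : (Σ i : Fin (k + 1), (fs i).Inner) ⊕ Bool → ℝ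
    | .inl ⟨i, w⟩ => ϕ i (.inl w)
    | .inr b => if b then 1 else 0
  have hψ : ∀ i u, ψ (vmapOr k fs i u) = ϕ i u := by
    rintro i (w | _ | _)
    exacts [rfl, (hsnk i).symm, (hsrc i).symm]
  refine ⟨ψ, rfl, rfl, ?_⟩
  rw [sum_leaves_or]
  refine sum_le_sum fun i _ => (le_of_eq ?_).trans (henergy i)
  simp only [ends, label, hψ]

/-- The `n`-th vertex along a series composition: `s`, then the `k` junctions, then `t`. -/
def andNode (k : ℕ) (fs : Fin (k + 1) → Formula N) (n : ℕ) : (Formula.and k fs).Vert :=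
  if h0 : n = 0 then .inr true else if h : n ≤ k then .inl (.inr ⟨n - 1, by omega⟩) else .inr false

theorem vmapAnd_src (i : Fin (k + 1)) : vmapAnd k fs i (.inr true) = andNode k fs i := by
  have := i.isLt
  simp only [vmapAnd, andNode]
  split_ifs <;> first | rfl | contradiction | omega

theorem vmapAnd_snk (i : Fin (k + 1)) : vmapAnd k fs i (.inr false) = andNode k fs (i + 1) := by
  have := i.isLt
  simp only [vmapAnd, andNode]
  split_ifs <;> first | rfl | contradiction | omega

theorem hasFlowLE_and {r : ℝ} (h : ∀ i, HasFlowLE (fs i) x b r) :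
    HasFlowLE (.and k fs) x b ((k + 1) * r) := by
  choose θ hflow hsupp henergy using h
  refine ⟨fun ⟨i, l⟩ => θ i l, fun g => ?_, fun ⟨i, l⟩ => hsupp i l, ?_⟩
  · have hchild : ∀ i, ∑ l : (fs i).Leaves,
        θ i l * (g (vmapAnd k fs i ((fs i).ends l).1) - g (vmapAnd k fs i ((fs i).ends l).2)) =
        g (andNode k fs i) - g (andNode k fs (i + 1)) := by
      intro i
      rw [← vmapAnd_src, ← vmapAnd_snk]
      exact hflow i (g ∘ vmapAnd k fs i)
    simp only [sum_leaves_and, ends, hchild]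
    rw [Fin.sum_univ_eq_sum_range (fun n => g (andNode k fs n) - g (andNode k fs (n + 1))),
      sum_range_sub']
    simp [andNode, src, snk]
  · rw [sum_leaves_and]
    refine (sum_le_sum fun i _ => henergy i).trans_eq ?_
    simp

theorem hasPotentialLE_and {q : ℝ} (h : ∀ i, HasPotentialLE (fs i) x b q) :
    HasPotentialLE (.and k fs) x b (q / (k + 1)) := by
  choose ϕ hsrc hsnk henergy using h
  have hk : (k + 1 : ℝ) ≠ 0 := by positivity
  -- the potential drops by `1 / (k + 1)` across each of the `k + 1` blocks
  let ψ : ((Σ i : Fin (k + 1), (fs i).Inner) ⊕ Fin k) ⊕ Bool → ℝ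
    | .inl (.inl ⟨i, w⟩) => (ϕ i (.inl w) + (k - i)) / (k + 1)
    | .inl (.inr j) => (k - j) / (k + 1)
    | .inr b => if b then 1 else 0
  have hnode : ∀ n ≤ k + 1, ψ (andNode k fs n) = (k + 1 - n) / (k + 1) := by
    intro n hn
    unfold andNode
    split_ifs with h0 h1
    · simp [ψ, h0, hk]
    · simp only [ψ]
      rw [Nat.cast_sub (by omega)]
      ring
    · simp [ψ, show n = k + 1 by omega]
  have hψ : ∀ i u, ψ (vmapAnd k fs i u) = (ϕ i u + (k - i)) / (k + 1) := by
    rintro i (w | _ | _)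
    · rfl
    · rw [vmapAnd_snk, hnode _ (by omega), show ϕ i (.inr false) = 0 from hsnk i]
      push_cast
      ring
    · rw [vmapAnd_src, hnode _ (by omega), show ϕ i (.inr true) = 1 from hsrc i]
      ring
  refine ⟨ψ, rfl, rfl, ?_⟩
  rw [sum_leaves_and]
  calc _ = ∑ i, (∑ l : (fs i).Leaves, if x ((fs i).label l) = b then
          (ϕ i ((fs i).ends l).1 - ϕ i ((fs i).ends l).2) ^ 2 else 0) / (k + 1) ^ 2 := by
        simp only [ends, label, hψ, sum_div]
        refine sum_congr rfl fun i _ => sum_congr rfl fun l _ => ?_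
        split_ifs <;> field_simp <;> ring
    _ ≤ ∑ _i : Fin (k + 1), q / (k + 1) ^ 2 := sum_le_sum fun i _ => by gcongr; exact henergy i
    _ = q / (k + 1) := by simp; field_simp

end Composition

end Formula

open Formula

theorem blockEmb_eq_finProdFinEquiv (k M : ℕ) (i : Fin (k + 1)) (m : Fin M) :
    blockEmb k M i m = finProdFinEquiv (i, m) := by
  ext
  simp only [blockEmb, finProdFinEquiv_apply_val]
  ring

def joinBlocks {k M : ℕ} (y : Fin (k + 1) → Fin M → Bool) : Fin ((k + 1) * M) → Bool :=
  Function.uncurry y ∘ finProdFinEquiv.symm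

@[simp]
theorem joinBlocks_blockEmb {k M : ℕ} (y : Fin (k + 1) → Fin M → Bool) (i : Fin (k + 1))
    (m : Fin M) : joinBlocks y (blockEmb k M i m) = y i m := by
  simp [joinBlocks, blockEmb_eq_finProdFinEquiv]

section Layers

variable {c : Bool} {k h : ℕ} {rest : List (Bool × ℕ × ℕ)}
  {x : Fin (numVars ((c, k, h) :: rest)) → Bool}

theorem eval_compF_cons_eq_self_iff :
    (compF ((c, k, h) :: rest)).eval x = c ↔
      ∃ i, (compF rest).eval (fun m => x (blockEmb k (numVars rest) i m)) = c := by
  cases c <;> simp only [compF, eval, ↓reduceIte, Bool.false_eq_true, List.any_eq_true,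
    List.all_eq_false, List.mem_finRange, true_and, Bool.not_eq_true] <;>
    exact exists_congr fun i => Eq.congr_left (eval_relabel (blockEmb k (numVars rest) i) _ x)

theorem eval_compF_cons_eq_not_iff :
    (compF ((c, k, h) :: rest)).eval x = !c ↔
      ∀ i, (compF rest).eval (fun m => x (blockEmb k (numVars rest) i m)) = !c := by
  simpa [Bool.eq_not_iff] using (eval_compF_cons_eq_self_iff (x := x)).not

/-- The promise of either gate in a form symmetric under `∧ ↔ ∨`, `0 ↔ 1`. -/
theorem inDom_cons_iff (hh : h ≤ k + 1) :
    inDom ((c, k, h) :: rest) x ↔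
      (∀ i, inDom rest (fun m => x (blockEmb k (numVars rest) i m))) ∧
      ((∀ i, (compF rest).eval (fun m => x (blockEmb k (numVars rest) i m)) = !c) ∨
        h ≤ #{i | (compF rest).eval (fun m => x (blockEmb k (numVars rest) i m)) = c}) := by
  cases c
  · have hcompl := card_filter_add_card_filter_not (s := univ)
      fun i => (compF rest).eval (fun m => x (blockEmb k (numVars rest) i m)) = true
    simp only [card_univ, Fintype.card_fin, Bool.not_eq_true] at hcompl
    simp only [inDom, Bool.false_eq_true, ↓reduceIte, Bool.not_false]
    constructor <;> rintro ⟨hdom, hprom | hprom⟩ <;> first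
      | exact ⟨hdom, Or.inl hprom⟩
      | exact ⟨hdom, Or.inr (by omega)⟩
  · rfl

end Layers

theorem eval_compF_const (L : List (Bool × ℕ × ℕ)) (b : Bool) :
    (compF L).eval (fun _ => b) = b := by
  induction L with
  | nil => rfl
  | cons p rest ih =>
    obtain ⟨c, k, h⟩ := p
    obtain rfl | rfl := Bool.eq_or_eq_not c b
    · exact eval_compF_cons_eq_self_iff.mpr ⟨0, ih⟩
    · simpa using (eval_compF_cons_eq_not_iff (c := !b) (h := h)).mpr fun _ => by
        rw [Bool.not_not]
        exact ih

variable {L : List (Bool × ℕ × ℕ)}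

theorem inDom_const (hh : ∀ p ∈ L, 1 ≤ p.2.2 ∧ p.2.2 ≤ p.2.1 + 1) (b : Bool) :
    inDom L (fun _ => b) := by
  induction L with
  | nil => trivial
  | cons p rest ih =>
    obtain ⟨c, k, h⟩ := p
    obtain ⟨-, hhk⟩ : 1 ≤ h ∧ h ≤ k + 1 := hh _ List.mem_cons_self
    refine (inDom_cons_iff hhk).mpr
      ⟨fun _ => ih fun p hp => hh p (List.mem_cons_of_mem _ hp), ?_⟩
    obtain rfl | rfl := Bool.eq_or_eq_not c b
    · refine Or.inr (hhk.trans_eq ?_)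
      rw [filter_true_of_mem fun i _ => eval_compF_const rest c, card_univ, Fintype.card_fin]
    · exact Or.inl fun _ => by rw [Bool.not_not]; exact eval_compF_const rest b

/-- `G_φ` for `b = true` and the dual graph `G'_φ` for `b = false`; in both, the edge of a
variable is present iff the variable equals `b`. -/
def compGraph (b : Bool) (L : List (Bool × ℕ × ℕ)) : Formula (numVars L) :=
  bif b then compF L else dualF (compF L)

theorem compGraph_nil (b : Bool) : compGraph b [] = .var ⟨0, Nat.one_pos⟩ := by
  cases b <;> rfl

theorem compGraph_cons_self (b : Bool) (k h : ℕ) (rest : List (Bool × ℕ × ℕ)) :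
    compGraph b ((b, k, h) :: rest) =
      .or k fun i => (compGraph b rest).relabel (blockEmb k (numVars rest) i) := by
  cases b
  · exact congrArg (Formula.or k) (funext fun i => dualF_relabel _ _)
  · rfl

theorem compGraph_cons_not (b : Bool) (k h : ℕ) (rest : List (Bool × ℕ × ℕ)) :
    compGraph b ((!b, k, h) :: rest) =
      .and k fun i => (compGraph b rest).relabel (blockEmb k (numVars rest) i) := by
  cases b
  · exact congrArg (Formula.and k) (funext fun i => dualF_relabel _ _)
  · rfl

/-- A layer acting in parallel on `G_φ(x)` (an `OR` layer for `b = true`, an `AND` layer for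
`b = false`) divides the worst-case resistance by `h`; a series layer multiplies it by `N`. -/
noncomputable def resBound (b : Bool) (L : List (Bool × ℕ × ℕ)) : ℝ :=
  (L.map fun p => if p.1 = b then (p.2.2 : ℝ)⁻¹ else p.2.1 + 1).prod

theorem resBound_nil (b : Bool) : resBound b [] = 1 := rfl

theorem resBound_cons_self (b : Bool) (k h : ℕ) (rest : List (Bool × ℕ × ℕ)) :
    resBound b ((b, k, h) :: rest) = (h : ℝ)⁻¹ * resBound b rest := by
  simp [resBound]

theorem resBound_cons_not (b : Bool) (k h : ℕ) (rest : List (Bool × ℕ × ℕ)) :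
    resBound b ((!b, k, h) :: rest) = (k + 1) * resBound b rest := by
  simp [resBound]

theorem resBound_pos (hh : ∀ p ∈ L, 1 ≤ p.2.2 ∧ p.2.2 ≤ p.2.1 + 1) (b : Bool) :
    0 < resBound b L := by
  refine List.prod_pos fun r hr => ?_
  obtain ⟨p, hp, rfl⟩ := List.mem_map.mp hr
  have : (0 : ℝ) < p.2.2 := by exact_mod_cast (hh p hp).1
  split_ifs <;> positivity

theorem resBound_true_mul_false (L : List (Bool × ℕ × ℕ)) :
    resBound true L * resBound false L =
      ((L.map fun p => p.2.1 + 1).prod : ℕ) / ((L.map fun p => p.2.2).prod : ℕ) := by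
  induction L with
  | nil => simp [resBound]
  | cons p rest ih =>
    obtain ⟨c, k, h⟩ := p
    have hlayer : resBound true ((c, k, h) :: rest) * resBound false ((c, k, h) :: rest) =
        (k + 1) / h * (resBound true rest * resBound false rest) := by
      cases c <;> simp only [resBound, List.map_cons, List.prod_cons] <;> simp <;> ring
    rw [hlayer, ih]
    simp only [List.map_cons, List.prod_cons, Nat.cast_mul, mul_div_mul_comm]
    push_cast
    ring

theorem hasFlowLE_compGraph (b : Bool)
    (hh : ∀ p ∈ L, 1 ≤ p.2.2 ∧ p.2.2 ≤ p.2.1 + 1) {x : Fin (numVars L) → Bool}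
    (hdom : inDom L x) (heval : (compF L).eval x = b) :
    HasFlowLE (compGraph b L) x b (resBound b L) := by
  induction L with
  | nil =>
    rw [compGraph_nil, resBound_nil]
    exact hasFlowLE_var heval
  | cons p rest ih =>
    obtain ⟨c, k, h⟩ := p
    obtain ⟨hh1, hhk⟩ : 1 ≤ h ∧ h ≤ k + 1 := hh _ List.mem_cons_self
    have htail : ∀ p ∈ rest, 1 ≤ p.2.2 ∧ p.2.2 ≤ p.2.1 + 1 :=
      fun p hp => hh p (List.mem_cons_of_mem _ hp)
    obtain ⟨hdoms, hprom⟩ := (inDom_cons_iff hhk).mp hdom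
    obtain rfl | rfl := Bool.eq_or_eq_not c b
    · obtain ⟨i₀, hi₀⟩ := eval_compF_cons_eq_self_iff.mp heval
      have hcard := hprom.resolve_left fun hall => by simp [hall i₀] at hi₀
      set T : Finset (Fin (k + 1)) :=
        {i | (compF rest).eval (fun m => x (blockEmb k (numVars rest) i m)) = c}
      have hT : T.Nonempty := card_pos.mp (hh1.trans hcard)
      rw [compGraph_cons_self, resBound_cons_self]
      refine (hasFlowLE_or hT fun i hi => (ih htail (hdoms i) (mem_filter.mp hi).2).relabel).mono ?_
      rw [inv_mul_eq_div]
      exact div_le_div_of_nonneg_left (resBound_pos htail c).le (by exact_mod_cast hh1)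
        (by exact_mod_cast hcard)
    · have hall := (eval_compF_cons_eq_not_iff (c := !b)).mp (by rwa [Bool.not_not])
      rw [compGraph_cons_not, resBound_cons_not]
      exact hasFlowLE_and fun i =>
        (ih htail (hdoms i) (by simpa using hall i)).relabel

theorem exists_hasPotentialLE_compGraph (b : Bool)
    (hh : ∀ p ∈ L, 1 ≤ p.2.2 ∧ p.2.2 ≤ p.2.1 + 1) :
    ∃ x, inDom L x ∧ (compF L).eval x = b ∧
      HasPotentialLE (compGraph b L) x b (resBound b L)⁻¹ := by
  induction L with
  | nil =>
    refine ⟨fun _ => b, trivial, rfl, ?_⟩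
    rw [compGraph_nil, resBound_nil, inv_one]
    exact hasPotentialLE_var _
  | cons p rest ih =>
    obtain ⟨c, k, h⟩ := p
    obtain ⟨hh1, hhk⟩ : 1 ≤ h ∧ h ≤ k + 1 := hh _ List.mem_cons_self
    have htail : ∀ p ∈ rest, 1 ≤ p.2.2 ∧ p.2.2 ≤ p.2.1 + 1 :=
      fun p hp => hh p (List.mem_cons_of_mem _ hp)
    obtain ⟨x₀, hdom₀, heval₀, hpot₀⟩ := ih htail
    obtain rfl | rfl := Bool.eq_or_eq_not c b
    · -- `h` blocks copy the witness for `rest`, the others are constant `!c` and carry no edge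
      set y : Fin (k + 1) → Fin (numVars rest) → Bool :=
        fun i => if (i : ℕ) < h then x₀ else fun _ => !c
      have hevaly : ∀ i, (compF rest).eval (y i) = c ↔ (i : ℕ) < h := by
        intro i
        by_cases hi : (i : ℕ) < h <;> simp [y, hi, heval₀, eval_compF_const]
      refine ⟨joinBlocks y, (inDom_cons_iff hhk).mpr ⟨fun i => ?_, Or.inr ?_⟩, ?_, ?_⟩
      · by_cases hi : (i : ℕ) < h <;> simp [y, hi, hdom₀, inDom_const htail]
      · simp only [joinBlocks_blockEmb, hevaly, Fin.card_filter_val_lt]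
        omega
      · exact eval_compF_cons_eq_self_iff.mpr ⟨0, by simpa using (hevaly 0).mpr hh1⟩
      · rw [compGraph_cons_self, resBound_cons_self, mul_inv, inv_inv]
        have hsum : (h : ℝ) * (resBound c rest)⁻¹ =
            ∑ i : Fin (k + 1), if (i : ℕ) < h then (resBound c rest)⁻¹ else 0 := by
          rw [sum_ite, sum_const_zero, add_zero, sum_const, Fin.card_filter_val_lt,
            min_eq_right hhk, nsmul_eq_mul]
        rw [hsum]
        refine hasPotentialLE_or fun i => ?_
        by_cases hi : (i : ℕ) < h
        · simp only [hi, if_true]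
          exact HasPotentialLE.relabel (by simpa [y, hi] using hpot₀)
        · simp only [hi, if_false]
          exact (hasPotentialLE_zero fun l => by simp [y, hi]).relabel
    · refine ⟨joinBlocks fun _ => x₀, (inDom_cons_iff hhk).mpr ⟨fun i => ?_, Or.inl fun i => ?_⟩,
        ?_, ?_⟩
      · simpa using hdom₀
      · simpa using heval₀
      · simpa using (eval_compF_cons_eq_not_iff (c := !b)).mpr fun i => by simpa using heval₀
      · rw [compGraph_cons_not, resBound_cons_not, mul_inv, mul_comm, ← div_eq_mul_inv]
        exact hasPotentialLE_and fun i => HasPotentialLE.relabel (by simpa using hpot₀)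

theorem iSup_effResOn_compGraph (b : Bool) (L : List (Bool × ℕ × ℕ))
    (hh : ∀ p ∈ L, 1 ≤ p.2.2 ∧ p.2.2 ≤ p.2.1 + 1) :
    (⨆ x : {x : Fin (numVars L) → Bool // inDom L x ∧ (compF L).eval x = b},
        effResOn (compGraph b L).ends (fun _ => (1 : ℝ))
          {l | x.1 ((compGraph b L).label l) = b} (compGraph b L).src (compGraph b L).snk) =
      ENNReal.ofReal (resBound b L) := by
  refine le_antisymm (iSup_le fun ⟨x, hdom, heval⟩ =>
    (hasFlowLE_compGraph b hh hdom heval).effResOn_le) ?_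
  obtain ⟨x, hdom, heval, hpot⟩ := exists_hasPotentialLE_compGraph b hh
  refine le_iSup_of_le ⟨x, hdom, heval⟩ ?_
  simpa using hpot.ofReal_inv_le_effResOn (inv_pos.mpr (resBound_pos hh b))

end STConn

open scoped ENNReal in
open STConn Formula in
/-- For a composition `φ = φ₁ ∘ ⋯ ∘ φ_l` of promise gates, where layer `i` is
`OR` on `Nᵢ = kᵢ + 1` bits restricted to Hamming weight `0` or `≥ hᵢ`, or `AND`
on `Nᵢ` bits restricted to Hamming weight `Nᵢ` or `≤ Nᵢ - hᵢ`, with domain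
`D`, the unit-weight effective resistances of the formula graph and its dual
(realized as the graph of the De Morgan dual formula) satisfy
`(max_{x∈D, φ(x)=1} R_{s,t}(G_φ(x))) · (max_{x∈D, φ(x)=0} R_{s',t'}(G'_φ(x)))
  = ∏ᵢ Nᵢ / ∏ᵢ hᵢ`. -/
theorem stmt_19 (L : List (Bool × ℕ × ℕ))
    (hh : ∀ p ∈ L, 1 ≤ p.2.2 ∧ p.2.2 ≤ p.2.1 + 1) :
    (⨆ x : {x : Fin (numVars L) → Bool // inDom L x ∧ (compF L).eval x = true},
        effResOn (compF L).ends (fun _ => (1 : ℝ))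
          {l | x.1 ((compF L).label l) = true} (compF L).src (compF L).snk) *
    (⨆ x : {x : Fin (numVars L) → Bool // inDom L x ∧ (compF L).eval x = false},
        effResOn (dualF (compF L)).ends (fun _ => (1 : ℝ))
          {l | x.1 ((dualF (compF L)).label l) = false}
          (dualF (compF L)).src (dualF (compF L)).snk)
      = (((L.map fun p => p.2.1 + 1).prod : ℕ) : ℝ≥0∞)
        / (((L.map fun p => p.2.2).prod : ℕ) : ℝ≥0∞) := by
  have hH : (0 : ℝ) < ((L.map fun p => p.2.2).prod : ℕ) := by
    exact_mod_cast List.prod_pos fun n hn => by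
      obtain ⟨p, hp, rfl⟩ := List.mem_map.mp hn
      exact (hh p hp).1
  calc _ = ENNReal.ofReal (resBound true L) * ENNReal.ofReal (resBound false L) :=
        congrArg₂ (· * ·) (iSup_effResOn_compGraph true L hh) (iSup_effResOn_compGraph false L hh)
    _ = _ := by
      rw [← ENNReal.ofReal_mul (resBound_pos hh true).le, resBound_true_mul_false,
        ENNReal.ofReal_div_of_pos hH, ENNReal.ofReal_natCast, ENNReal.ofReal_natCast]
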